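/- Let N ≥ 1 be an integer and θ_0, …, θ_{N−1} positive real numbers. There exist unique real numbers c, d_0, …, d_{N−1} such that the functions u_k(x) = −(1/θ_k)(x²/2 + c x) + d_k satisfy the boundary conditions u_0(0) = 0 and u_{N−1}(1) = 0 together with the continuity constraints u_{k−1}(k/N) = u_k(k/N) for all k ∈ {1,…,N−1}. They are given explicitly by d_0 = 0, c = −(1/(2N)) (Σ_{k=0}^{N−1} θ_k^{−1}(2k+1)) / (Σ_{k=0}^{N−1} θ_k^{−1}), and d_k = −Σ_{j=1}^{k} ((1/2)(j/N)² + c(j/N)) (θ_{j−1}^{−1} − θ_j^{−1}) for 1 ≤ k ≤ N−1. -/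

import Mathlib

/-!
Write `g_j = (j/N)²/2 + c (j/N)` for the value of `x²/2 + c x` at the node `j/N`. Continuity at
the node `k/N` says `d_k = d_{k-1} - g_k (θ_{k-1}⁻¹ - θ_k⁻¹)`, so together with `d_0 = 0` it
determines every `d_k` as the stated sum. Summation by parts then turns the remaining boundary
condition `u_{N-1}(1) = 0` into `∑_j θ_j⁻¹ (g_{j+1} - g_j) = 0`, i.e. `u(0) - u(1) = 0`. Since
`g_{j+1} - g_j = (2j+1)/(2N²) + c/N`, this is a linear equation in `c` whose leading coefficient
`(1/N) ∑ θ_j⁻¹` is positive, so it has exactly one solution, the stated `c`.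
-/

/-- The pieces `u_k x = -(1/θ_k)(x²/2 + cx) + d_k` satisfy the boundary conditions
`u_0 0 = 0`, `u_{N-1} 1 = 0` and the continuity constraints `u_{k-1}(k/N) = u_k(k/N)`. -/
def PoissonPiecewiseConditions (N : ℕ) (θ : ℕ → ℝ) (c : ℝ) (d : ℕ → ℝ) : Prop :=
  (-(1 / θ 0) * ((0 : ℝ) ^ 2 / 2 + c * 0) + d 0 = 0) ∧
  (-(1 / θ (N - 1)) * ((1 : ℝ) ^ 2 / 2 + c * 1) + d (N - 1) = 0) ∧
  (∀ k, 1 ≤ k → k ≤ N - 1 →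
    -(1 / θ (k - 1)) * (((k : ℝ) / N) ^ 2 / 2 + c * ((k : ℝ) / N)) + d (k - 1) =
      -(1 / θ k) * (((k : ℝ) / N) ^ 2 / 2 + c * ((k : ℝ) / N)) + d k)

open Finset

theorem sum_Icc_mul_sub_eq {R : Type*} [CommRing R] (a g : ℕ → R) (hg : g 0 = 0) (n : ℕ) :
    ∑ j ∈ Icc 1 n, g j * (a (j - 1) - a j) =
      ∑ j ∈ range (n + 1), a j * (g (j + 1) - g j) - a n * g (n + 1) := by
  induction n with
  | zero => simp [hg]
  | succ n ih =>
    rw [sum_Icc_succ_top (by omega), ih, sum_range_succ _ (n + 1), Nat.add_sub_cancel]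
    ring

namespace PoissonPiecewise

noncomputable def nodeValue (N : ℕ) (c : ℝ) (j : ℕ) : ℝ :=
  (1 / 2) * ((j : ℝ) / N) ^ 2 + c * ((j : ℝ) / N)

noncomputable def offset (N : ℕ) (θ : ℕ → ℝ) (c : ℝ) (k : ℕ) : ℝ :=
  -∑ j ∈ Icc 1 k, nodeValue N c j * ((θ (j - 1))⁻¹ - (θ j)⁻¹)

/-- `u(0) - u(1)` for the piecewise function, accumulated piece by piece. -/
noncomputable def drop (N : ℕ) (θ : ℕ → ℝ) (c : ℝ) : ℝ :=
  ∑ j ∈ range N, (θ j)⁻¹ * (nodeValue N c (j + 1) - nodeValue N c j)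

noncomputable def solutionC (N : ℕ) (θ : ℕ → ℝ) : ℝ :=
  -((1 / (2 * (N : ℝ))) *
    ((∑ k ∈ range N, (θ k)⁻¹ * (2 * (k : ℝ) + 1)) / (∑ k ∈ range N, (θ k)⁻¹)))

theorem nodeValue_zero (N : ℕ) (c : ℝ) : nodeValue N c 0 = 0 := by
  simp [nodeValue]

theorem nodeValue_self {N : ℕ} (hN : N ≠ 0) (c : ℝ) : nodeValue N c N = 1 / 2 + c := by
  simp [nodeValue, hN]

theorem offset_zero (N : ℕ) (θ : ℕ → ℝ) (c : ℝ) : offset N θ c 0 = 0 := by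
  simp [offset]

theorem offset_succ (N : ℕ) (θ : ℕ → ℝ) (c : ℝ) (k : ℕ) :
    offset N θ c (k + 1) =
      offset N θ c k - nodeValue N c (k + 1) * ((θ k)⁻¹ - (θ (k + 1))⁻¹) := by
  rw [offset, offset, sum_Icc_succ_top (by omega), Nat.add_sub_cancel]
  ring

theorem offset_sub_eq_neg_drop {N : ℕ} (hN : N ≠ 0) (θ : ℕ → ℝ) (c : ℝ) :
    offset N θ c (N - 1) - (θ (N - 1))⁻¹ * (1 / 2 + c) = -drop N θ c := by
  have hsucc : N - 1 + 1 = N := by omega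
  have h := sum_Icc_mul_sub_eq (fun j => (θ j)⁻¹) (nodeValue N c) (nodeValue_zero N c) (N - 1)
  rw [hsucc, nodeValue_self hN] at h
  rw [offset, drop, h]
  ring

theorem drop_eq {N : ℕ} (hN : N ≠ 0) (θ : ℕ → ℝ) (c : ℝ) :
    drop N θ c = (∑ k ∈ range N, (θ k)⁻¹ * (2 * (k : ℝ) + 1)) / (2 * (N : ℝ) ^ 2) +
      c / N * ∑ k ∈ range N, (θ k)⁻¹ := by
  have hN' : (N : ℝ) ≠ 0 := Nat.cast_ne_zero.mpr hN
  have hstep (j : ℕ) :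
      nodeValue N c (j + 1) - nodeValue N c j = (2 * j + 1) / (2 * N ^ 2) + c / N := by
    simp only [nodeValue]
    push_cast
    field_simp
    ring
  rw [drop, sum_congr rfl fun j _ => by rw [hstep j], sum_div, mul_sum, ← sum_add_distrib]
  exact sum_congr rfl fun k _ => by ring

theorem drop_eq_zero_iff {N : ℕ} (hN : N ≠ 0) {θ : ℕ → ℝ}
    (hsum : ∑ k ∈ range N, (θ k)⁻¹ ≠ 0) (c : ℝ) : drop N θ c = 0 ↔ c = solutionC N θ := by
  have hN' : (N : ℝ) ≠ 0 := Nat.cast_ne_zero.mpr hN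
  rw [drop_eq hN, solutionC]
  generalize ∑ k ∈ range N, (θ k)⁻¹ * (2 * (k : ℝ) + 1) = A
  generalize ∑ k ∈ range N, (θ k)⁻¹ = B at hsum ⊢
  field_simp
  constructor <;> intro h <;> linear_combination h

theorem eq_offset_of_conditions {N : ℕ} {θ : ℕ → ℝ} {c : ℝ} {d : ℕ → ℝ}
    (h : PoissonPiecewiseConditions N θ c d) : ∀ k ≤ N - 1, d k = offset N θ c k := by
  obtain ⟨hleft, -, hcont⟩ := h
  intro k hk
  induction k with
  | zero => rw [offset_zero]; linarith
  | succ k ih =>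
    have hk' := hcont (k + 1) (by omega) hk
    rw [Nat.add_sub_cancel] at hk'
    rw [offset_succ, ← ih (by omega), nodeValue]
    push_cast at hk' ⊢
    linear_combination -hk'

theorem drop_eq_zero_of_conditions {N : ℕ} (hN : N ≠ 0) {θ : ℕ → ℝ} {c : ℝ}
    {d : ℕ → ℝ} (h : PoissonPiecewiseConditions N θ c d) : drop N θ c = 0 := by
  have hright := h.2.1
  rw [eq_offset_of_conditions h (N - 1) le_rfl] at hright
  linear_combination offset_sub_eq_neg_drop hN θ c - hright

theorem conditions_offset_of_drop_eq_zero {N : ℕ} (hN : N ≠ 0) {θ : ℕ → ℝ} {c : ℝ}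
    (hdrop : drop N θ c = 0) : PoissonPiecewiseConditions N θ c (offset N θ c) := by
  refine ⟨?_, ?_, fun k hk _ => ?_⟩
  · simp [offset_zero]
  · linear_combination offset_sub_eq_neg_drop hN θ c - hdrop
  · obtain ⟨m, rfl⟩ : ∃ m, k = m + 1 := ⟨k - 1, by omega⟩
    rw [Nat.add_sub_cancel, offset_succ, nodeValue]
    push_cast
    ring

end PoissonPiecewise

open PoissonPiecewise in
/-- There exist unique real numbers `c, d_0, …, d_{N-1}` satisfying the two boundary
conditions and the `N-1` continuity constraints, given explicitly by `d_0 = 0`,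
`c = -(1/(2N))(Σ θ_k⁻¹(2k+1))/(Σ θ_k⁻¹)` and
`d_k = -Σ_{j=1}^k ((1/2)(j/N)² + c(j/N))(θ_{j-1}⁻¹ - θ_j⁻¹)`. -/
theorem statement5 (N : ℕ) (hN : 1 ≤ N) (θ : ℕ → ℝ) (hθ : ∀ k < N, 0 < θ k) :
    (PoissonPiecewiseConditions N θ
      (-((1 / (2 * (N : ℝ))) *
        ((∑ k ∈ Finset.range N, (θ k)⁻¹ * (2 * (k : ℝ) + 1)) /
          (∑ k ∈ Finset.range N, (θ k)⁻¹))))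
      (fun k => -∑ j ∈ Finset.Icc 1 k,
        ((1 / 2) * ((j : ℝ) / N) ^ 2 +
          (-((1 / (2 * (N : ℝ))) *
            ((∑ i ∈ Finset.range N, (θ i)⁻¹ * (2 * (i : ℝ) + 1)) /
              (∑ i ∈ Finset.range N, (θ i)⁻¹)))) * ((j : ℝ) / N)) *
          ((θ (j - 1))⁻¹ - (θ j)⁻¹))) ∧
    (∀ c d c' d', PoissonPiecewiseConditions N θ c d →
      PoissonPiecewiseConditions N θ c' d' →
      c = c' ∧ ∀ k < N, d k = d' k) := by
  have hN0 : N ≠ 0 := by omega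
  have hsum : ∑ k ∈ range N, (θ k)⁻¹ ≠ 0 :=
    (sum_pos (fun k hk => inv_pos.mpr (hθ k (mem_range.mp hk)))
      (nonempty_range_iff.mpr hN0)).ne'
  have hc {c d} (h : PoissonPiecewiseConditions N θ c d) : c = solutionC N θ :=
    (drop_eq_zero_iff hN0 hsum c).mp (drop_eq_zero_of_conditions hN0 h)
  refine ⟨conditions_offset_of_drop_eq_zero hN0 ((drop_eq_zero_iff hN0 hsum _).mpr rfl),
    fun c d c' d' h h' => ⟨(hc h).trans (hc h').symm, fun k hk => ?_⟩⟩
  rw [eq_offset_of_conditions h k (by omega), eq_offset_of_conditions h' k (by omega), hc h, hc h']
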